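/- arXiv:2002.09715 — 2 statements merged into one kernel-verified Lean document; each statement's English description precedes it below -/
import Mathlib

section
/- For the function q_α(t,x,y) = min(t^{-n/α}, t·d^{-n-α}) with d = d_g(x,y), there exists a constant C (depending on α, n) such that for all d with 0 < d < N^{-1/(2α)} one has ∫_0^∞ e^{-Nt} q_α(t,x,y) dt ≤ C d^{α-n}, and for d ≥ N^{-1/(2α)} one has ∫_0^∞ e^{-Nt} q_α(t,x,y) dt ≤ C (N^{-1} d^{α-n} + N^{n/α - 1} e^{-√N}). -/
/-!
Put `p = n / α > 1` and `a = d ^ α`, so that `d ^ (-(n + α)) = a ^ (-(p + 1))`,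
`d ^ (α - n) = a ^ (1 - p)`, and the two branches of `q_α(t) = min (t ^ (-p)) (t * a ^ (-(p + 1)))`
cross at `t = a`. Split the Laplace integral at `t = a`, using the linear branch on `(0, a]` and the
power branch on `(a, ∞)`.

For small `d`, drop `e^{-Nt} ≤ 1`: the two pieces are `a ^ (1 - p) / 2` and `a ^ (1 - p) / (p - 1)`.
For `d ≥ N ^ (-1/(2α))`, i.e. `a ≥ N ^ (-1/2)`, keep the exponential: the first piece is at most
`a ^ (-(p + 1)) ∫₀^∞ t e^{-Nt} dt = a ^ (-(p + 1)) / N² ≤ a ^ (1 - p) / N`, and on `(a, ∞)` the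
power is at most `a ^ (-p) ≤ N ^ p` while `∫_a^∞ e^{-Nt} dt ≤ e^{-√N} / N`.
-/

open MeasureTheory Real Set

theorem setIntegral_Ioi_le_add_of_le {f g h : ℝ → ℝ} {c a : ℝ} (hca : c ≤ a)
    (hf : AEStronglyMeasurable f (volume.restrict (Ioi c))) (hf_nonneg : ∀ t ∈ Ioi c, 0 ≤ f t)
    (hg : IntegrableOn g (Ioc c a)) (hh : IntegrableOn h (Ioi a))
    (hfg : ∀ t ∈ Ioc c a, f t ≤ g t) (hfh : ∀ t ∈ Ioi a, f t ≤ h t) :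
    ∫ t in Ioi c, f t ≤ (∫ t in Ioc c a, g t) + ∫ t in Ioi a, h t := by
  have hf_Ioc : IntegrableOn f (Ioc c a) :=
    hg.mono' (hf.mono_set Ioc_subset_Ioi_self) <| ae_restrict_of_forall_mem measurableSet_Ioc
      fun t ht ↦ (norm_of_nonneg (hf_nonneg t ht.1)).trans_le (hfg t ht)
  have hf_Ioi : IntegrableOn f (Ioi a) :=
    hh.mono' (hf.mono_set (Ioi_subset_Ioi hca)) <| ae_restrict_of_forall_mem measurableSet_Ioi
      fun t ht ↦ (norm_of_nonneg (hf_nonneg t (hca.trans_lt ht))).trans_le (hfh t ht)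
  rw [← Ioc_union_Ioi_eq_Ioi hca,
    setIntegral_union Ioc_disjoint_Ioi_same measurableSet_Ioi hf_Ioc hf_Ioi]
  exact add_le_add (setIntegral_mono_on hf_Ioc hg measurableSet_Ioc hfg)
    (setIntegral_mono_on hf_Ioi hh measurableSet_Ioi hfh)

theorem integrableOn_Ioi_exp_neg_mul_mul {N : ℝ} (hN : 0 < N) :
    IntegrableOn (fun t ↦ exp (-N * t) * t) (Ioi 0) := by
  simpa [mul_comm] using
    integrableOn_rpow_mul_exp_neg_mul_rpow (s := 1) (p := 1) (by norm_num) one_pos hN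

theorem integral_Ioi_exp_neg_mul_mul {N : ℝ} (hN : 0 < N) :
    ∫ t in Ioi 0, exp (-N * t) * t = (N ^ 2)⁻¹ := by
  have h := integral_rpow_mul_exp_neg_mul_Ioi two_pos hN
  norm_num [Gamma_two] at h
  simpa [neg_mul, mul_comm] using h

theorem setIntegral_Ioc_exp_neg_mul_mul_le {N : ℝ} (hN : 0 < N) (a : ℝ) :
    ∫ t in Ioc 0 a, exp (-N * t) * t ≤ (N ^ 2)⁻¹ :=
  integral_Ioi_exp_neg_mul_mul hN ▸ setIntegral_mono_set (integrableOn_Ioi_exp_neg_mul_mul hN)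
    (ae_restrict_of_forall_mem measurableSet_Ioi fun t ht ↦ by have := mem_Ioi.mp ht; positivity)
    Ioc_subset_Ioi_self.eventuallyLE

theorem setIntegral_Ioi_exp_neg_mul_le_of_inv_sqrt_le {N a : ℝ} (hN : 0 < N) (ha : (√N)⁻¹ ≤ a) :
    ∫ t in Ioi a, exp (-N * t) ≤ N⁻¹ * exp (-√N) := by
  have hNa : √N ≤ N * a := calc
    √N = N * (√N)⁻¹ := by rw [← div_eq_mul_inv, div_sqrt]
    _ ≤ N * a := by gcongr
  rw [integral_exp_mul_Ioi (neg_lt_zero.mpr hN), neg_div_neg_eq, div_eq_inv_mul]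
  gcongr
  linarith

theorem rpow_one_sub_eq_sq_mul_rpow {a : ℝ} (ha : 0 < a) (p : ℝ) :
    a ^ (1 - p) = a ^ 2 * a ^ (-(p + 1)) := by
  rw [show 1 - p = 2 + -(p + 1) by ring, rpow_add ha, rpow_two]

theorem integral_exp_mul_min_rpow_le {N p a : ℝ} (hN : 0 ≤ N) (hp : 1 < p) (ha : 0 < a) :
    ∫ t in Ioi 0, exp (-N * t) * min (t ^ (-p)) (t * a ^ (-(p + 1)))
      ≤ (1 / 2 + 1 / (p - 1)) * a ^ (1 - p) := by
  have hmin_nonneg : ∀ t ∈ Ioi (0 : ℝ), 0 ≤ min (t ^ (-p)) (t * a ^ (-(p + 1))) := fun t ht ↦ by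
    have := mem_Ioi.mp ht; positivity
  have hle_min : ∀ t ∈ Ioi (0 : ℝ), exp (-N * t) * min (t ^ (-p)) (t * a ^ (-(p + 1)))
      ≤ min (t ^ (-p)) (t * a ^ (-(p + 1))) := fun t ht ↦
    mul_le_of_le_one_left (hmin_nonneg t ht) (exp_le_one_iff.mpr (by nlinarith [mem_Ioi.mp ht]))
  have hsplit := setIntegral_Ioi_le_add_of_le
    (f := fun t ↦ exp (-N * t) * min (t ^ (-p)) (t * a ^ (-(p + 1)))) ha.le (by fun_prop)
    (fun t ht ↦ mul_nonneg (exp_nonneg _) (hmin_nonneg t ht))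
    (continuous_mul_const _).integrableOn_Ioc
    (integrableOn_Ioi_rpow_of_lt (by linarith : -p < -1) ha)
    (fun t ht ↦ (hle_min t ht.1).trans (min_le_right _ _))
    (fun t ht ↦ (hle_min t (ha.trans ht)).trans (min_le_left _ _))
  have hnear : ∫ t in Ioc 0 a, t * a ^ (-(p + 1)) = 1 / 2 * a ^ (1 - p) := by
    rw [integral_mul_const, ← intervalIntegral.integral_of_le ha.le, integral_id,
      rpow_one_sub_eq_sq_mul_rpow ha]
    ring
  have hfar : ∫ t in Ioi a, t ^ (-p) = 1 / (p - 1) * a ^ (1 - p) := by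
    rw [integral_Ioi_rpow_of_lt (by linarith) ha, show -p + 1 = 1 - p by ring, div_eq_mul_inv,
      show (1 - p)⁻¹ = -(p - 1)⁻¹ by rw [← inv_neg, neg_sub]]
    ring
  linarith

theorem integral_exp_mul_min_rpow_le_of_inv_sqrt_le {N p a : ℝ} (hN : 1 ≤ N) (hp : 0 ≤ p)
    (ha : (√N)⁻¹ ≤ a) :
    ∫ t in Ioi 0, exp (-N * t) * min (t ^ (-p)) (t * a ^ (-(p + 1)))
      ≤ N⁻¹ * a ^ (1 - p) + N ^ (p - 1) * exp (-√N) := by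
  have hN0 : 0 < N := by linarith
  have hsqrt : 0 < √N := sqrt_pos.mpr hN0
  have ha0 : 0 < a := (inv_pos.mpr hsqrt).trans_le ha
  have hsplit := setIntegral_Ioi_le_add_of_le
    (f := fun t ↦ exp (-N * t) * min (t ^ (-p)) (t * a ^ (-(p + 1))))
    (g := fun t ↦ exp (-N * t) * t * a ^ (-(p + 1))) (h := fun t ↦ exp (-N * t) * a ^ (-p))
    ha0.le (by fun_prop) (fun t ht ↦ by have := mem_Ioi.mp ht; positivity)
    (IntegrableOn.mono_set ((integrableOn_Ioi_exp_neg_mul_mul hN0).mul_const _)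
      Ioc_subset_Ioi_self)
    ((integrableOn_exp_mul_Ioi (neg_lt_zero.mpr hN0) a).mul_const _)
    (fun t _ ↦ by
      rw [mul_assoc]; exact mul_le_mul_of_nonneg_left (min_le_right _ _) (exp_nonneg _))
    (fun t ht ↦ mul_le_mul_of_nonneg_left ((min_le_left _ _).trans
      (rpow_le_rpow_of_nonpos ha0 ht.le (neg_nonpos.mpr hp))) (exp_nonneg _))
  have hnear : ∫ t in Ioc 0 a, exp (-N * t) * t * a ^ (-(p + 1)) ≤ N⁻¹ * a ^ (1 - p) := by
    have hN_inv : N⁻¹ ≤ a ^ 2 := by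
      simpa [inv_pow, sq_sqrt hN0.le] using pow_le_pow_left₀ (by positivity) ha 2
    calc ∫ t in Ioc 0 a, exp (-N * t) * t * a ^ (-(p + 1))
        ≤ N⁻¹ * N⁻¹ * a ^ (-(p + 1)) := by
          rw [integral_mul_const, ← mul_inv, ← sq]
          gcongr
          exact setIntegral_Ioc_exp_neg_mul_mul_le hN0 a
      _ ≤ N⁻¹ * a ^ 2 * a ^ (-(p + 1)) := by gcongr
      _ = N⁻¹ * a ^ (1 - p) := by rw [rpow_one_sub_eq_sq_mul_rpow ha0, mul_assoc]
  have hfar : ∫ t in Ioi a, exp (-N * t) * a ^ (-p) ≤ N ^ (p - 1) * exp (-√N) := by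
    have ha_pow : a ^ (-p) ≤ N ^ p := by
      rw [rpow_neg ha0.le, ← inv_rpow ha0.le]
      exact rpow_le_rpow (by positivity)
        ((inv_le_of_inv_le₀ hsqrt ha).trans (sqrt_le_self_iff.mpr (Or.inr hN))) hp
    calc ∫ t in Ioi a, exp (-N * t) * a ^ (-p)
        ≤ N⁻¹ * exp (-√N) * N ^ p := by
          rw [integral_mul_const]
          gcongr
          exact setIntegral_Ioi_exp_neg_mul_le_of_inv_sqrt_le hN0 ha
      _ = N ^ (p - 1) * exp (-√N) := by rw [rpow_sub_one hN0.ne']; ring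
  linarith

/-- Laplace-transform estimates for `q_α(t) = min(t^{-n/α}, t d^{-n-α})`:
for `d < N^{-1/(2α)}` the integral `∫_0^∞ e^{-Nt} q_α(t) dt` is `≤ C d^{α-n}`, and for
`d ≥ N^{-1/(2α)}` it is `≤ C (N^{-1} d^{α-n} + N^{n/α-1} e^{-√N})`. -/
theorem laplace_transform_qalpha_bounds (n : ℕ) (hn : 2 ≤ n) (α : ℝ) (hα : 0 < α)
    (hα2 : α < 2) :
    ∃ C : ℝ, 0 < C ∧ ∀ N : ℝ, 1 ≤ N → ∀ d : ℝ, 0 < d →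
      ((d < N ^ (-(1 / (2 * α))) →
        (∫ t in Ioi (0 : ℝ),
            Real.exp (-N * t) * min (t ^ (-((n : ℝ) / α))) (t * d ^ (-((n : ℝ) + α))))
          ≤ C * d ^ (α - (n : ℝ))) ∧
      (N ^ (-(1 / (2 * α))) ≤ d →
        (∫ t in Ioi (0 : ℝ),
            Real.exp (-N * t) * min (t ^ (-((n : ℝ) / α))) (t * d ^ (-((n : ℝ) + α))))
          ≤ C * (N⁻¹ * d ^ (α - (n : ℝ)) + N ^ ((n : ℝ) / α - 1) * Real.exp (-Real.sqrt N)))) := by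
  have hαn : α < n := hα2.trans_le (by exact_mod_cast hn)
  set p : ℝ := n / α
  have hp : 1 < p := (one_lt_div hα).mpr hαn
  have hp_sub : 0 < p - 1 := sub_pos.mpr hp
  refine ⟨1 + 1 / (p - 1), by positivity, fun N hN d hd ↦ ?_⟩
  set a := d ^ α
  have hαp : α * p = n := mul_div_cancel₀ _ hα.ne'
  have hkernel : d ^ (-((n : ℝ) + α)) = a ^ (-(p + 1)) := by
    rw [← rpow_mul hd.le]; congr 1; linear_combination hαp
  have hbound : d ^ (α - (n : ℝ)) = a ^ (1 - p) := by
    rw [← rpow_mul hd.le]; congr 1; linear_combination hαp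
  rw [hkernel, hbound]
  constructor
  · intro _
    calc _ ≤ (1 / 2 + 1 / (p - 1)) * a ^ (1 - p) :=
          integral_exp_mul_min_rpow_le (by linarith) hp (rpow_pos_of_pos hd α)
      _ ≤ (1 + 1 / (p - 1)) * a ^ (1 - p) := by gcongr; norm_num
  · intro hdN
    have ha : (√N)⁻¹ ≤ a := by
      have h := rpow_le_rpow (by positivity) hdN hα.le
      rwa [← rpow_mul (by linarith), show -(1 / (2 * α)) * α = -(1 / 2) by field_simp,
        rpow_neg (by linarith), ← sqrt_eq_rpow] at h
    exact (integral_exp_mul_min_rpow_le_of_inv_sqrt_le hN (by linarith) ha).trans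
      (le_mul_of_one_le_left (by positivity) (by simp only [le_add_iff_nonneg_right]; positivity))
end

section
/- For 0 < α < 2 and z = (λ+i)^α with λ ≥ 1 sufficiently large (so that 0 < arg(z) < πα/4), one has for all γ > 0 the two-sided bound |γ^α - 2z γ^{α/2} cos(πα/2) + z²| ≈ γ^α + |z|², with implicit constants depending only on α. -/
/-!
Write `g = γ^{α/2}`, `θ = πα/2` and `z = (λ+i)^α = r e^{iφ}` with `φ = α arg (λ+i) ≤ α/λ`.
The expression factors as `(g - r e^{i(φ+θ)}) (g - r e^{i(φ-θ)})`. Once `φ ≤ min (θ/2) (π - θ)`,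
both angles `φ ± θ` have cosine at most `cos (θ/2) < 1`, so by the law of cosines each factor
satisfies `‖g - r e^{it}‖² ≥ (1 - cos (θ/2)) (g² + r²)`; the upper bound is the triangle inequality.
-/

open Complex Real

namespace Complex

lemma sq_sub_two_mul_cos_add_sq_eq_mul (x r φ θ : ℝ) :
    (x : ℂ) ^ 2 - 2 * (r * exp (φ * I)) * x * (Real.cos θ : ℂ) + (r * exp (φ * I)) ^ 2 =
      (x - r * exp ((φ + θ : ℝ) * I)) * (x - r * exp ((φ - θ : ℝ) * I)) := by
  have hadd : exp ((φ + θ : ℝ) * I) = exp (φ * I) * exp (θ * I) := by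
    rw [ofReal_add, add_mul, exp_add]
  have hsub : exp ((φ - θ : ℝ) * I) = exp (φ * I) * exp (-θ * I) := by
    rw [ofReal_sub, sub_eq_add_neg, add_mul, exp_add, neg_mul]
  have hinv : exp (θ * I) * exp (-θ * I) = 1 := by rw [← exp_add]; simp
  rw [hadd, hsub, ofReal_cos]
  linear_combination (-(x * r * exp (φ * I))) * two_cos (θ : ℂ) - (r * exp (φ * I)) ^ 2 * hinv

lemma norm_ofReal_sub_mul_exp_sq (g r t : ℝ) :
    ‖(g : ℂ) - r * exp (t * I)‖ ^ 2 = g ^ 2 - 2 * g * r * Real.cos t + r ^ 2 := by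
  rw [← normSq_eq_norm_sq, normSq_apply]
  simp only [sub_re, sub_im, ofReal_re, ofReal_im, re_ofReal_mul, im_ofReal_mul, exp_ofReal_mul_I_re,
    exp_ofReal_mul_I_im]
  linear_combination r ^ 2 * Real.sin_sq_add_cos_sq t

lemma norm_ofReal_sub_mul_exp_le {g r : ℝ} (hg : 0 ≤ g) (hr : 0 ≤ r) (t : ℝ) :
    ‖(g : ℂ) - r * exp (t * I)‖ ≤ g + r := by
  calc ‖(g : ℂ) - r * exp (t * I)‖ ≤ ‖(g : ℂ)‖ + ‖(r : ℂ) * exp (t * I)‖ := norm_sub_le _ _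
    _ = g + r := by rw [norm_mul, norm_exp_ofReal_mul_I, mul_one, norm_real, norm_real,
      Real.norm_of_nonneg hg, Real.norm_of_nonneg hr]

lemma one_sub_mul_le_norm_ofReal_sub_mul_exp_sq {g r t c : ℝ} (hg : 0 ≤ g) (hr : 0 ≤ r)
    (hc : 0 ≤ c) (ht : Real.cos t ≤ c) :
    (1 - c) * (g ^ 2 + r ^ 2) ≤ ‖(g : ℂ) - r * exp (t * I)‖ ^ 2 := by
  rw [norm_ofReal_sub_mul_exp_sq]
  nlinarith [mul_le_mul_of_nonneg_left ht (mul_nonneg hg hr), mul_nonneg hc (sq_nonneg (g - r))]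

lemma cpow_ofReal_eq_mul_exp (x : ℂ) (y : ℝ) :
    x ^ (y : ℂ) = ((‖x‖ ^ y : ℝ) : ℂ) * exp ((arg x * y : ℝ) * I) := by
  rw [cpow_ofReal, exp_mul_I, ← ofReal_cos, ← ofReal_sin]

lemma arg_ofReal_add_I_le_inv {x : ℝ} (hx : 0 < x) : arg (x + I) ≤ x⁻¹ := by
  have hnonneg : 0 ≤ arg (x + I) := arg_nonneg_iff.mpr (by simp)
  have hlt : arg (x + I) < π / 2 := arg_lt_pi_div_two_iff.mpr (Or.inl (by simpa using hx))
  calc arg (x + I) ≤ Real.tan (arg (x + I)) := le_tan hnonneg hlt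
    _ = x⁻¹ := by rw [tan_arg]; simp

variable {g r φ θ : ℝ}

lemma norm_sq_sub_two_mul_cos_add_sq_le (hg : 0 ≤ g) (hr : 0 ≤ r) :
    ‖(g : ℂ) ^ 2 - 2 * (r * exp (φ * I)) * g * (Real.cos θ : ℂ) + (r * exp (φ * I)) ^ 2‖ ≤
      2 * (g ^ 2 + r ^ 2) := by
  rw [sq_sub_two_mul_cos_add_sq_eq_mul, norm_mul]
  calc _ ≤ (g + r) * (g + r) := mul_le_mul (norm_ofReal_sub_mul_exp_le hg hr _)
        (norm_ofReal_sub_mul_exp_le hg hr _) (norm_nonneg _) (by positivity)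
    _ ≤ 2 * (g ^ 2 + r ^ 2) := by nlinarith [sq_nonneg (g - r)]

lemma one_sub_cos_half_mul_le_norm_sq_sub_two_mul_cos_add_sq (hg : 0 ≤ g) (hr : 0 ≤ r)
    (hφ : 0 ≤ φ) (hφθ : φ ≤ θ / 2) (hφπ : φ ≤ π - θ) :
    (1 - Real.cos (θ / 2)) * (g ^ 2 + r ^ 2) ≤
      ‖(g : ℂ) ^ 2 - 2 * (r * exp (φ * I)) * g * (Real.cos θ : ℂ) + (r * exp (φ * I)) ^ 2‖ := by
  have hc : 0 ≤ Real.cos (θ / 2) := Real.cos_nonneg_of_neg_pi_div_two_le_of_le (by linarith)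
    (by linarith)
  have hadd : Real.cos (φ + θ) ≤ Real.cos (θ / 2) :=
    Real.cos_le_cos_of_nonneg_of_le_pi (by linarith) (by linarith) (by linarith)
  have hsub : Real.cos (φ - θ) ≤ Real.cos (θ / 2) := by
    rw [← Real.cos_neg, neg_sub]
    exact Real.cos_le_cos_of_nonneg_of_le_pi (by linarith) (by linarith) (by linarith)
  have hS : 0 ≤ (1 - Real.cos (θ / 2)) * (g ^ 2 + r ^ 2) :=
    mul_nonneg (by linarith [Real.cos_le_one (θ / 2)]) (by positivity)
  rw [sq_sub_two_mul_cos_add_sq_eq_mul, ← pow_le_pow_iff_left₀ hS (norm_nonneg _) two_ne_zero,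
    norm_mul, mul_pow ‖_‖]
  exact (sq _).trans_le (mul_le_mul (one_sub_mul_le_norm_ofReal_sub_mul_exp_sq hg hr hc hadd)
    (one_sub_mul_le_norm_ofReal_sub_mul_exp_sq hg hr hc hsub) hS (sq_nonneg _))

end Complex

/-- For `0 < α < 2` and `z = (λ+i)^α` with `λ` large (so `0 < arg z < πα/4`), one has the
two-sided bound `|γ^α - 2z γ^{α/2} cos(πα/2) + z²| ≈ γ^α + |z|²` for all `γ > 0`, with
implicit constants depending only on `α`. -/
theorem resolvent_denominator_comparable (α : ℝ) (hα : 0 < α) (hα2 : α < 2) :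
    ∃ c C lam₀ : ℝ, 0 < c ∧ 0 < C ∧ 1 ≤ lam₀ ∧
      ∀ lam : ℝ, lam₀ ≤ lam → ∀ γ : ℝ, 0 < γ →
        (c * (γ ^ α + ‖(((lam : ℂ) + Complex.I) ^ (α : ℂ))‖ ^ 2) ≤
          ‖(((γ ^ α : ℝ) : ℂ)
            - 2 * (((lam : ℂ) + Complex.I) ^ (α : ℂ)) * ((γ ^ (α / 2) : ℝ) : ℂ)
              * ((Real.cos (π * α / 2) : ℝ) : ℂ)
            + (((lam : ℂ) + Complex.I) ^ (α : ℂ)) ^ 2)‖) ∧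
        (‖(((γ ^ α : ℝ) : ℂ)
            - 2 * (((lam : ℂ) + Complex.I) ^ (α : ℂ)) * ((γ ^ (α / 2) : ℝ) : ℂ)
              * ((Real.cos (π * α / 2) : ℝ) : ℂ)
            + (((lam : ℂ) + Complex.I) ^ (α : ℂ)) ^ 2)‖ ≤
          C * (γ ^ α + ‖(((lam : ℂ) + Complex.I) ^ (α : ℂ))‖ ^ 2)) := by
  set θ := π * α / 2
  have hθ : 0 < θ ∧ θ < π := ⟨by positivity, by simp only [θ]; nlinarith [pi_pos]⟩
  set m := min (θ / 2) (π - θ)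
  have hm : 0 < m := lt_min (by linarith) (by linarith)
  have hc : 0 < 1 - Real.cos (θ / 2) := by
    linarith [Real.cos_lt_cos_of_nonneg_of_le_pi le_rfl (by linarith) (by linarith : 0 < θ / 2),
      Real.cos_zero]
  refine ⟨_, 2, max 1 (α / m), hc, two_pos, le_max_left _ _, fun lam hlam γ hγ => ?_⟩
  have hlam₀ : 0 < lam := one_pos.trans_le ((le_max_left _ _).trans hlam)
  set φ := arg (lam + I) * α
  have hφ : 0 ≤ φ := mul_nonneg (arg_nonneg_iff.mpr (by simp)) hα.le
  have hφm : φ ≤ m := calc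
    φ ≤ lam⁻¹ * α := mul_le_mul_of_nonneg_right (arg_ofReal_add_I_le_inv hlam₀) hα.le
    _ ≤ m := by
      rw [inv_mul_le_iff₀ hlam₀]; exact (div_le_iff₀ hm).mp ((le_max_right _ _).trans hlam)
  set g := γ ^ (α / 2)
  have hg : γ ^ α = g ^ 2 := by rw [← rpow_mul_natCast hγ.le]; norm_num
  rw [norm_cpow_real, cpow_ofReal_eq_mul_exp, hg, ofReal_pow]
  exact ⟨one_sub_cos_half_mul_le_norm_sq_sub_two_mul_cos_add_sq (by positivity) (by positivity)
      hφ (hφm.trans (min_le_left _ _)) (hφm.trans (min_le_right _ _)),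
    norm_sq_sub_two_mul_cos_add_sq_le (by positivity) (by positivity)⟩
end
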